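/- arXiv:2209.15273 — 4 statements merged into one kernel-verified Lean document; each statement's English description precedes it below -/
import Mathlib

section
/- Let y ∈ ℂ^M, A ∈ ℂ^{M×N} with columns a_1, …, a_N, and λ > 0. A vector x̂ ∈ ℂ^N is a global minimizer of the complex LASSO objective x ↦ (1/2)‖y − Ax‖₂² + λ·∑_{i=1}^N |x_i| if and only if for every i ∈ {1, …, N}: (i) if x̂_i ≠ 0 then a_i^H (y − A x̂) = λ · x̂_i / |x̂_i|, and (ii) if x̂_i = 0 then |a_i^H (y − A x̂)| ≤ λ. -/
/-!
Write `c = Aᴴ(y - A x̂)` and `F` for the objective. Expanding the square gives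
`F(x̂ + d) = F(x̂) + ½‖A d‖² + ∑ᵢ (λ(|x̂ᵢ + dᵢ| - |x̂ᵢ|) - Re(conj cᵢ · dᵢ))`,
so `x̂` is a minimizer iff each `cᵢ` is a subgradient of `λ|·|` at `x̂ᵢ`: sufficiency because
`‖A d‖² ≥ 0`, necessity by moving the single coordinate `x̂ᵢ` a fraction `t` of the way towards
any `w`, where convexity of `|·|` makes the separable part at most linear in `t` while the
quadratic part is `O(t²)`. The subgradients of `λ‖·‖` at `z` are `λ z / ‖z‖` if `z ≠ 0` and the
closed ball of radius `λ` if `z = 0`; the real inner product of `ℂ` is `⟪c, d⟫_ℝ = Re(conj c · d)`.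
-/

open Matrix Finset Filter Topology InnerProductSpace

noncomputable def lassoObj {M N : ℕ} (y : Fin M → ℂ) (A : Matrix (Fin M) (Fin N) ℂ)
    (lam : ℝ) (x : Fin N → ℂ) : ℝ :=
  (1 / 2) * ∑ j, ‖y j - A.mulVec x j‖ ^ 2 + lam * ∑ i, ‖x i‖

section NormSubgradient

variable {E : Type*} [NormedAddCommGroup E] [InnerProductSpace ℝ E]

theorem forall_inner_sub_le_mul_norm_sub_iff {lam : ℝ} (hlam : 0 ≤ lam) (z c : E) :
    (∀ w, ⟪c, w - z⟫_ℝ ≤ lam * (‖w‖ - ‖z‖)) ↔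
      (z ≠ 0 → c = (lam / ‖z‖) • z) ∧ (z = 0 → ‖c‖ ≤ lam) := by
  constructor
  · intro h
    have hinner : ∀ w, ⟪c, w⟫_ℝ ≤ lam * ‖w‖ := fun w => by
      have := h (w + z)
      rw [add_sub_cancel_right] at this
      nlinarith [norm_add_le w z]
    have hc : ‖c‖ ≤ lam := by
      rcases (norm_nonneg c).eq_or_lt with hc0 | hc0
      · rwa [← hc0]
      · have := hinner c
        rw [real_inner_self_eq_norm_sq] at this
        nlinarith
    refine ⟨fun hz => ?_, fun _ => hc⟩
    have hzpos : 0 < ‖z‖ := norm_pos_iff.mpr hz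
    have hlow : lam * ‖z‖ ≤ ⟪c, z⟫_ℝ := by
      have := h 0
      rw [zero_sub, inner_neg_right, norm_zero] at this
      linarith
    have hnorm : ‖c‖ = lam := by
      nlinarith [real_inner_le_norm c z]
    have heq : ⟪c, z⟫_ℝ = ‖c‖ * ‖z‖ := by
      nlinarith [real_inner_le_norm c z]
    rw [inner_eq_norm_mul_iff_real, hnorm] at heq
    rw [div_eq_inv_mul, mul_smul, ← heq, smul_smul, inv_mul_cancel₀ hzpos.ne', one_smul]
  · rintro ⟨hne, hzero⟩ w
    rcases eq_or_ne z 0 with rfl | hz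
    · simpa using (real_inner_le_norm c w).trans
        (mul_le_mul_of_nonneg_right (hzero rfl) (norm_nonneg w))
    · have hzpos : 0 < ‖z‖ := norm_pos_iff.mpr hz
      rw [hne hz, real_inner_smul_left, inner_sub_right, real_inner_self_eq_norm_sq]
      calc lam / ‖z‖ * (⟪z, w⟫_ℝ - ‖z‖ ^ 2)
          ≤ lam / ‖z‖ * (‖z‖ * ‖w‖ - ‖z‖ ^ 2) := by
            gcongr
            exact real_inner_le_norm z w
        _ = lam * (‖w‖ - ‖z‖) := by field_simp

end NormSubgradient

theorem Matrix.sum_inner_mulVec {m n : Type*} [Fintype m] [Fintype n]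
    (A : Matrix m n ℂ) (r : m → ℂ) (d : n → ℂ) :
    ∑ j, ⟪r j, (A *ᵥ d) j⟫_ℝ = ∑ i, ⟪(Aᴴ *ᵥ r) i, d i⟫_ℝ := by
  have h : star r ⬝ᵥ (A *ᵥ d) = star (Aᴴ *ᵥ r) ⬝ᵥ d := by
    rw [dotProduct_mulVec, star_mulVec, conjTranspose_conjTranspose]
  simp only [Complex.inner, ← Complex.re_sum]
  simpa [dotProduct, mul_comm] using congrArg Complex.re h

section Lasso

variable {M N : ℕ} (y : Fin M → ℂ) (A : Matrix (Fin M) (Fin N) ℂ) (lam : ℝ) (xh : Fin N → ℂ)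

theorem lassoObj_add (d : Fin N → ℂ) :
    lassoObj y A lam (xh + d) = lassoObj y A lam xh + (1 / 2) * ∑ j, ‖(A *ᵥ d) j‖ ^ 2 +
      ∑ i, (lam * (‖xh i + d i‖ - ‖xh i‖) - ⟪(Aᴴ *ᵥ (y - A *ᵥ xh)) i, d i⟫_ℝ) := by
  have hres : ∀ j, y j - (A *ᵥ (xh + d)) j = (y - A *ᵥ xh) j - (A *ᵥ d) j := fun j => by
    simp only [mulVec_add, Pi.add_apply, Pi.sub_apply]; ring
  simp only [lassoObj, hres, norm_sub_sq_real, ← sum_inner_mulVec, sum_add_distrib,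
    sum_sub_distrib, ← mul_sum, Pi.add_apply, Pi.sub_apply]
  ring

theorem lassoObj_le_of_forall_inner_sub_le
    (h : ∀ i w, ⟪(Aᴴ *ᵥ (y - A *ᵥ xh)) i, w - xh i⟫_ℝ ≤ lam * (‖w‖ - ‖xh i‖))
    (x : Fin N → ℂ) : lassoObj y A lam xh ≤ lassoObj y A lam x := by
  have hsep : 0 ≤ ∑ i, (lam * (‖xh i + (x - xh) i‖ - ‖xh i‖) -
      ⟪(Aᴴ *ᵥ (y - A *ᵥ xh)) i, (x - xh) i⟫_ℝ) :=
    sum_nonneg fun i _ => by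
      simpa only [Pi.sub_apply, add_sub_cancel, sub_nonneg] using h i (x i)
  calc lassoObj y A lam xh ≤ lassoObj y A lam (xh + (x - xh)) := by
        rw [lassoObj_add]
        have : 0 ≤ (1 / 2 : ℝ) * ∑ j, ‖(A *ᵥ (x - xh)) j‖ ^ 2 := by positivity
        linarith
    _ = lassoObj y A lam x := by rw [add_sub_cancel]

theorem lassoObj_add_single_le (hlam : 0 ≤ lam) (i : Fin N) (w : ℂ) {t : ℝ} (ht₀ : 0 ≤ t)
    (ht₁ : t ≤ 1) :
    lassoObj y A lam (xh + Pi.single i (t • (w - xh i))) ≤ lassoObj y A lam xh +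
      t ^ 2 * ((1 / 2) * ∑ j, ‖(A *ᵥ Pi.single i (w - xh i)) j‖ ^ 2) +
      t * (lam * (‖w‖ - ‖xh i‖) - ⟪(Aᴴ *ᵥ (y - A *ᵥ xh)) i, w - xh i⟫_ℝ) := by
  have hquad : ∑ j, ‖(A *ᵥ Pi.single i (t • (w - xh i))) j‖ ^ 2 =
      t ^ 2 * ∑ j, ‖(A *ᵥ Pi.single i (w - xh i)) j‖ ^ 2 := by
    rw [Pi.single_smul', mulVec_smul, mul_sum]
    simp only [Pi.smul_apply, norm_smul, mul_pow, Real.norm_eq_abs, sq_abs]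
  have hconv : ‖xh i + t • (w - xh i)‖ ≤ (1 - t) * ‖xh i‖ + t * ‖w‖ := by
    calc ‖xh i + t • (w - xh i)‖ = ‖(1 - t) • xh i + t • w‖ := by
          congr 1; module
      _ ≤ (1 - t) * ‖xh i‖ + t * ‖w‖ := by
          refine (norm_add_le _ _).trans_eq ?_
          rw [norm_smul, norm_smul, Real.norm_of_nonneg (sub_nonneg.2 ht₁),
            Real.norm_of_nonneg ht₀]
  rw [lassoObj_add, hquad, Fintype.sum_eq_single i fun k hk => by simp [hk]]
  simp only [Pi.single_eq_same, real_inner_smul_right]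
  nlinarith [mul_le_mul_of_nonneg_left hconv hlam]

theorem inner_sub_le_of_forall_lassoObj_le (hlam : 0 ≤ lam)
    (hmin : ∀ x, lassoObj y A lam xh ≤ lassoObj y A lam x) (i : Fin N) (w : ℂ) :
    ⟪(Aᴴ *ᵥ (y - A *ᵥ xh)) i, w - xh i⟫_ℝ ≤ lam * (‖w‖ - ‖xh i‖) := by
  set Q := (1 / 2) * ∑ j, ‖(A *ᵥ Pi.single i (w - xh i)) j‖ ^ 2 with hQ
  have hsmall : ∀ t ∈ Set.Ioo (0 : ℝ) 1,
      ⟪(Aᴴ *ᵥ (y - A *ᵥ xh)) i, w - xh i⟫_ℝ ≤ lam * (‖w‖ - ‖xh i‖) + t * Q := by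
    rintro t ⟨ht₀, ht₁⟩
    have := (hmin _).trans (lassoObj_add_single_le y A lam xh hlam i w ht₀.le ht₁.le)
    rw [← hQ] at this
    nlinarith
  have hlim : Tendsto (fun t => lam * (‖w‖ - ‖xh i‖) + t * Q) (𝓝[>] 0)
      (𝓝 (lam * (‖w‖ - ‖xh i‖))) := by
    have : Continuous fun t : ℝ => lam * (‖w‖ - ‖xh i‖) + t * Q := by fun_prop
    simpa using (this.tendsto 0).mono_left nhdsWithin_le_nhds
  exact ge_of_tendsto hlim (eventually_of_mem (Ioo_mem_nhdsGT one_pos) hsmall)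

end Lasso

/-- `x̂` is a global minimizer of the complex LASSO objective iff for every `i`,
(i) `x̂ᵢ ≠ 0 → aᵢᴴ(y − Ax̂) = λ·x̂ᵢ/|x̂ᵢ|` and (ii) `x̂ᵢ = 0 → |aᵢᴴ(y − Ax̂)| ≤ λ`. -/
theorem lasso_optimality_conditions {M N : ℕ} (y : Fin M → ℂ)
    (A : Matrix (Fin M) (Fin N) ℂ) (lam : ℝ) (hlam : 0 < lam) (xh : Fin N → ℂ) :
    (∀ x : Fin N → ℂ, lassoObj y A lam xh ≤ lassoObj y A lam x) ↔
      ∀ i : Fin N,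
        (xh i ≠ 0 →
          Aᴴ.mulVec (y - A.mulVec xh) i = (lam : ℂ) * xh i / (‖xh i‖ : ℂ)) ∧
        (xh i = 0 → ‖Aᴴ.mulVec (y - A.mulVec xh) i‖ ≤ lam) := by
  have hmin_iff : (∀ x, lassoObj y A lam xh ≤ lassoObj y A lam x) ↔
      ∀ i w, ⟪(Aᴴ *ᵥ (y - A *ᵥ xh)) i, w - xh i⟫_ℝ ≤ lam * (‖w‖ - ‖xh i‖) :=
    ⟨inner_sub_le_of_forall_lassoObj_le y A lam xh hlam.le,
      lassoObj_le_of_forall_inner_sub_le y A lam xh⟩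
  rw [hmin_iff]
  refine forall_congr' fun i => ?_
  rw [forall_inner_sub_le_mul_norm_sub_iff hlam.le, Complex.real_smul]
  push_cast
  rw [mul_div_right_comm]
end

section
/- Let y ∈ ℂ^M, A ∈ ℂ^{M×N}, λ > 0, let x̂ be a global minimizer of the complex LASSO objective, and let Λ > 0. Define the debiased LASSO estimator x̂^d = x̂ + (1/Λ) A^H (y − A x̂). Then for every index i with x̂_i ≠ 0, the i-th entry satisfies |x̂^d_i| = |x̂_i| + λ/Λ. -/
/-! Write `r = (Aᴴ(y − Ax̂))ᵢ`. Moving the minimizer by `c` in coordinate `i` changes the objective by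
`−⟪r, c⟫_ℝ + (∑ⱼ |Aⱼᵢ|²)/2 · |c|² + λ(|x̂ᵢ + c| − |x̂ᵢ|)`, which must be `≥ 0` for every `c ∈ ℂ`.
As `x̂ᵢ ≠ 0`, `|x̂ᵢ + c| ≤ |x̂ᵢ| + ⟪x̂ᵢ, c⟫_ℝ/|x̂ᵢ| + O(|c|²)`, so `⟪r − λx̂ᵢ/|x̂ᵢ|, c⟫_ℝ = O(|c|²)`;
taking `c` a small multiple of `r − λx̂ᵢ/|x̂ᵢ|` shows `r = λx̂ᵢ/|x̂ᵢ|`. Hence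
`x̂ᵈᵢ = (1 + λ/(Λ|x̂ᵢ|)) x̂ᵢ`, whose modulus is `|x̂ᵢ| + λ/Λ`. -/

open Matrix Finset

/-- The debiased LASSO estimator `x̂ᵈ = x̂ + (1/Λ) Aᴴ(y − Ax̂)`. -/
noncomputable def debiasedLasso {M N : ℕ} (y : Fin M → ℂ) (A : Matrix (Fin M) (Fin N) ℂ)
    (Lam : ℝ) (xh : Fin N → ℂ) : Fin N → ℂ :=
  xh + (1 / Lam : ℝ) • Aᴴ.mulVec (y - A.mulVec xh)

open RealInnerProductSpace

section InnerProductSpace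

variable {E : Type*} [NormedAddCommGroup E] [InnerProductSpace ℝ E]

theorem norm_add_le_norm_add_inner_div_add_sq_div {a : E} (ha : a ≠ 0) (c : E) :
    ‖a + c‖ ≤ ‖a‖ + ⟪a, c⟫ / ‖a‖ + ‖c‖ ^ 2 / (2 * ‖a‖) := by
  have ha' : 0 < ‖a‖ := norm_pos_iff.mpr ha
  have hrhs : ‖a‖ + ⟪a, c⟫ / ‖a‖ + ‖c‖ ^ 2 / (2 * ‖a‖) = (‖a + c‖ ^ 2 + ‖a‖ ^ 2) / (2 * ‖a‖) := by
    rw [norm_add_sq_real]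
    field_simp
    ring
  rw [hrhs, le_div_iff₀ (by positivity)]
  nlinarith [sq_nonneg (‖a + c‖ - ‖a‖)]

theorem eq_zero_of_forall_inner_le_mul_norm_sq {v : E} {C : ℝ}
    (h : ∀ c, ⟪v, c⟫ ≤ C * ‖c‖ ^ 2) : v = 0 := by
  by_contra hv
  have hv' : 0 < ‖v‖ ^ 2 := by positivity
  set t : ℝ := 1 / (|C| + 1) with ht
  have ht0 : 0 < t := by positivity
  have hCt : C * t < 1 := by
    rw [ht, mul_one_div, div_lt_one (by positivity)]
    linarith [le_abs_self C]
  have hscaled := h (t • v)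
  rw [real_inner_smul_right, real_inner_self_eq_norm_sq, norm_smul, Real.norm_of_nonneg ht0.le,
    mul_pow] at hscaled
  nlinarith [mul_pos ht0 hv']

theorem eq_smul_of_forall_inner_le_norm_add_sub {a r : E} (ha : a ≠ 0) {K lam : ℝ}
    (hlam : 0 ≤ lam) (h : ∀ c, ⟪r, c⟫ ≤ K * ‖c‖ ^ 2 + lam * (‖a + c‖ - ‖a‖)) :
    r = (lam / ‖a‖) • a := by
  rw [← sub_eq_zero]
  refine eq_zero_of_forall_inner_le_mul_norm_sq (C := K + lam / (2 * ‖a‖)) fun c => ?_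
  have hnorm := mul_le_mul_of_nonneg_left (norm_add_le_norm_add_inner_div_add_sq_div ha c) hlam
  rw [inner_sub_left, real_inner_smul_left]
  have hc := h c
  have e1 : lam / ‖a‖ * ⟪a, c⟫ = lam * (⟪a, c⟫ / ‖a‖) := by ring
  have e2 : lam / (2 * ‖a‖) * ‖c‖ ^ 2 = lam * (‖c‖ ^ 2 / (2 * ‖a‖)) := by ring
  rw [mul_add, mul_add] at hnorm
  linarith

end InnerProductSpace

theorem inner_mul_right_eq_inner_conj_mul (z w c : ℂ) :
    ⟪z, w * c⟫ = ⟪starRingEnd ℂ w * z, c⟫ := by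
  simp only [Complex.inner, map_mul, Complex.conj_conj, Complex.mul_re, Complex.conj_re,
    Complex.conj_im, Complex.mul_im]
  ring

theorem sum_norm_sub_mulVec_add_single_sq {M N : ℕ} (y : Fin M → ℂ)
    (A : Matrix (Fin M) (Fin N) ℂ) (x : Fin N → ℂ) (i : Fin N) (c : ℂ) :
    ∑ j, ‖y j - (A *ᵥ (x + Pi.single i c)) j‖ ^ 2 =
      ∑ j, ‖y j - (A *ᵥ x) j‖ ^ 2 - 2 * ⟪(Aᴴ *ᵥ (y - A *ᵥ x)) i, c⟫
        + (∑ j, ‖A j i‖ ^ 2) * ‖c‖ ^ 2 := by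
  have hcol : ∀ j, y j - (A *ᵥ (x + Pi.single i c)) j = (y - A *ᵥ x) j - A j i * c := by
    intro j
    simp only [mulVec_add, mulVec_single, Pi.add_apply, Pi.sub_apply, Pi.smul_apply, col_apply,
      MulOpposite.smul_eq_mul_unop, MulOpposite.unop_op]
    ring
  have hadj : (Aᴴ *ᵥ (y - A *ᵥ x)) i = ∑ j, starRingEnd ℂ (A j i) * (y - A *ᵥ x) j := by
    simp [mulVec, dotProduct, conjTranspose_apply]
  simp only [hcol, norm_sub_sq_real, inner_mul_right_eq_inner_conj_mul, hadj, sum_inner,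
    norm_mul, mul_pow, sum_add_distrib, sum_sub_distrib, ← mul_sum, ← sum_mul, Pi.sub_apply]

theorem sum_norm_add_single {ι E : Type*} [Fintype ι] [DecidableEq ι] [SeminormedAddCommGroup E]
    (x : ι → E) (i : ι) (c : E) :
    ∑ k, ‖(x + Pi.single i c : ι → E) k‖ = ∑ k, ‖x k‖ + (‖x i + c‖ - ‖x i‖) := by
  rw [← sub_eq_iff_eq_add', ← sum_sub_distrib]
  refine (sum_eq_single i (fun k _ hk => ?_) (by simp)).trans (by simp)
  simp [Pi.single_eq_of_ne hk]

theorem lassoObj_add_single {M N : ℕ} (y : Fin M → ℂ) (A : Matrix (Fin M) (Fin N) ℂ) (lam : ℝ)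
    (x : Fin N → ℂ) (i : Fin N) (c : ℂ) :
    lassoObj y A lam (x + Pi.single i c) =
      lassoObj y A lam x - ⟪(Aᴴ *ᵥ (y - A *ᵥ x)) i, c⟫ + (∑ j, ‖A j i‖ ^ 2) / 2 * ‖c‖ ^ 2
        + lam * (‖x i + c‖ - ‖x i‖) := by
  simp only [lassoObj, sum_norm_sub_mulVec_add_single_sq, sum_norm_add_single]
  ring

theorem conjTranspose_mulVec_residual_eq_of_isMin {M N : ℕ} {y : Fin M → ℂ}
    {A : Matrix (Fin M) (Fin N) ℂ} {lam : ℝ} (hlam : 0 ≤ lam) {xh : Fin N → ℂ}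
    (hmin : ∀ x, lassoObj y A lam xh ≤ lassoObj y A lam x) {i : Fin N} (hi : xh i ≠ 0) :
    (Aᴴ *ᵥ (y - A *ᵥ xh)) i = (lam / ‖xh i‖) • xh i := by
  refine eq_smul_of_forall_inner_le_norm_add_sub (K := (∑ j, ‖A j i‖ ^ 2) / 2) hi hlam fun c => ?_
  have hle := hmin (xh + Pi.single i c)
  rw [lassoObj_add_single] at hle
  linarith

/-- for every index `i` with `x̂ᵢ ≠ 0`, the debiased LASSO estimator satisfies
`|x̂ᵈᵢ| = |x̂ᵢ| + λ/Λ`. -/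
theorem debiasedLasso_abs_eq_of_ne_zero {M N : ℕ} (y : Fin M → ℂ)
    (A : Matrix (Fin M) (Fin N) ℂ) (lam : ℝ) (hlam : 0 < lam) (xh : Fin N → ℂ)
    (hmin : ∀ x : Fin N → ℂ, lassoObj y A lam xh ≤ lassoObj y A lam x)
    (Lam : ℝ) (hLam : 0 < Lam) :
    ∀ i : Fin N, xh i ≠ 0 → ‖debiasedLasso y A Lam xh i‖ = ‖xh i‖ + lam / Lam := by
  intro i hi
  have hxi : 0 < ‖xh i‖ := norm_pos_iff.mpr hi
  have hd : debiasedLasso y A Lam xh i = (1 + lam / (Lam * ‖xh i‖)) • xh i := by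
    rw [debiasedLasso, Pi.add_apply, Pi.smul_apply,
      conjTranspose_mulVec_residual_eq_of_isMin hlam.le hmin hi, smul_smul, add_smul, one_smul]
    congr 2
    field_simp
  rw [hd, norm_smul, Real.norm_of_nonneg (by positivity)]
  field_simp
end

section
/- Let c ≥ 0, σ₁ > 0, σ₂ > 0 with σ₁ ≠ σ₂, and μ₂ ∈ ℝ. Suppose for each N ∈ ℕ we have vectors w₁(N), w₂(N) ∈ ℝ^N such that |w₂,ᵢ(N) − w₁,ᵢ(N)| ≤ c for every i ≤ N and every N. If the empirical distribution of the entries of w₁(N) converges weakly (as N → ∞) to the Gaussian distribution N(0, σ₁²), then the empirical distribution of the entries of w₂(N) cannot converge weakly to the Gaussian distribution N(μ₂, σ₂²). -/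
open Filter MeasureTheory ProbabilityTheory BoundedContinuousFunction Real Set
open scoped NNReal Topology

/-!
If every entry of `w` is at most `c` plus the corresponding entry of `w'`, the monotone ramp
`x ↦ clamp (x - t) 0 1`, squeezed between the indicators of `[t + 1, ∞)` and `(t, ∞)`, gives in the
limit `μ [t + 1, ∞) ≤ ν (t - c, ∞)` for the two limit laws. Since `|w₂ - w₁| ≤ c` this holds in
both directions, so the Gaussian with the larger variance cannot have the heavier tail. But it
does: its mass on `[s, ∞)` is at least its density at `s + 1`, while the Chernoff bound caps the
other tail by `exp (-(s - m)² / 2v)` with a smaller `v`, and the ratio of the two blows up.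
-/

noncomputable def ramp (t : ℝ) : ℝ →ᵇ ℝ :=
  ofNormedAddCommGroup (fun x => max 0 (min (x - t) 1)) (by fun_prop) 1 fun x => by
    rw [Real.norm_eq_abs, abs_le]
    exact ⟨by linarith [le_max_left (0 : ℝ) (min (x - t) 1)], max_le zero_le_one (min_le_right _ _)⟩

@[simp]
lemma ramp_apply (t x : ℝ) : ramp t x = max 0 (min (x - t) 1) := rfl

lemma monotone_ramp (t : ℝ) : Monotone (ramp t) := fun x y hxy => by
  simp only [ramp_apply]
  gcongr

lemma ramp_add (t c x : ℝ) : ramp t (x + c) = ramp (t - c) x := by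
  simp only [ramp_apply]
  ring_nf

lemma indicator_Ici_le_ramp (t : ℝ) : (Ici (t + 1)).indicator 1 ≤ ramp t := fun x => by
  by_cases hx : t + 1 ≤ x
  · simp [hx, show 1 ≤ x - t by linarith]
  · simp [hx]

lemma ramp_le_indicator_Ioi (t : ℝ) : ⇑(ramp t) ≤ (Ioi t).indicator 1 := fun x => by
  by_cases hx : t < x
  · simp [hx]
  · simp [hx, show x - t ≤ 0 by linarith]

section FiniteMeasure

variable (μ : Measure ℝ) [IsFiniteMeasure μ] (t : ℝ)

lemma measureReal_Ici_le_integral_ramp : μ.real (Ici (t + 1)) ≤ ∫ x, ramp t x ∂μ := by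
  rw [← integral_indicator_one measurableSet_Ici]
  exact integral_mono ((integrable_const 1).indicator measurableSet_Ici) ((ramp t).integrable μ)
    (indicator_Ici_le_ramp t)

lemma integral_ramp_le_measureReal_Ioi : ∫ x, ramp t x ∂μ ≤ μ.real (Ioi t) := by
  rw [← integral_indicator_one measurableSet_Ioi]
  exact integral_mono ((ramp t).integrable μ) ((integrable_const 1).indicator measurableSet_Ioi)
    (ramp_le_indicator_Ioi t)

end FiniteMeasure

noncomputable def empiricalMean (f : ℝ → ℝ) {N : ℕ} (w : Fin N → ℝ) : ℝ := (N : ℝ)⁻¹ * ∑ i, f (w i)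

lemma empiricalMean_le {f g : ℝ → ℝ} {N : ℕ} {w w' : Fin N → ℝ} (h : ∀ i, f (w i) ≤ g (w' i)) :
    empiricalMean f w ≤ empiricalMean g w' :=
  mul_le_mul_of_nonneg_left (Finset.sum_le_sum fun i _ => h i) (by positivity)

lemma measureReal_Ici_le_of_tendsto_empiricalMean {w w' : (N : ℕ) → Fin N → ℝ} {c : ℝ}
    (hle : ∀ N i, w N i ≤ w' N i + c) {μ ν : Measure ℝ} [IsFiniteMeasure μ] [IsFiniteMeasure ν]
    (hμ : ∀ f : ℝ →ᵇ ℝ, Tendsto (fun N => empiricalMean f (w N)) atTop (𝓝 (∫ x, f x ∂μ)))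
    (hν : ∀ f : ℝ →ᵇ ℝ, Tendsto (fun N => empiricalMean f (w' N)) atTop (𝓝 (∫ x, f x ∂ν)))
    (t : ℝ) : μ.real (Ici (t + 1)) ≤ ν.real (Ioi (t - c)) := by
  have hramp : ∫ x, ramp t x ∂μ ≤ ∫ x, ramp (t - c) x ∂ν :=
    le_of_tendsto_of_tendsto' (hμ (ramp t)) (hν (ramp (t - c))) fun N => empiricalMean_le fun i =>
      (monotone_ramp t (hle N i)).trans_eq (ramp_add t c _)
  calc μ.real (Ici (t + 1)) ≤ ∫ x, ramp t x ∂μ := measureReal_Ici_le_integral_ramp μ t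
    _ ≤ ∫ x, ramp (t - c) x ∂ν := hramp
    _ ≤ ν.real (Ioi (t - c)) := integral_ramp_le_measureReal_Ioi ν (t - c)

lemma hasSubgaussianMGF_gaussianReal (m : ℝ) (v : ℝ≥0) :
    HasSubgaussianMGF (fun x => x - m) v (gaussianReal m v) where
  integrable_exp_mul t := by
    simp_rw [mul_sub, Real.exp_sub]
    exact (integrable_exp_mul_gaussianReal t).div_const _
  mgf_le t := by
    rw [mgf_gaussianReal (μ := 0) (by rw [gaussianReal_map_sub_const, sub_self])]
    simp

lemma measureReal_gaussianReal_Ioi_le {m s : ℝ} (v : ℝ≥0) (hs : m ≤ s) :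
    (gaussianReal m v).real (Ioi s) ≤ exp (-(s - m) ^ 2 / (2 * v)) :=
  (measureReal_mono fun x (hx : s < x) => show s - m ≤ x - m by linarith).trans
    ((hasSubgaussianMGF_gaussianReal m v).measure_ge_le (sub_nonneg.2 hs))

lemma gaussianPDFReal_antitoneOn (m : ℝ) (v : ℝ≥0) : AntitoneOn (gaussianPDFReal m v) (Ici m) := by
  intro x (hx : m ≤ x) y _ hxy
  simp only [gaussianPDFReal]
  gcongr

lemma gaussianPDFReal_add_one_le_measureReal_gaussianReal_Ici {m s : ℝ} {v : ℝ≥0} (hv : v ≠ 0)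
    (hs : m ≤ s) : gaussianPDFReal m v (s + 1) ≤ (gaussianReal m v).real (Ici s) := by
  have hint := integrable_gaussianPDFReal m v
  calc gaussianPDFReal m v (s + 1) = gaussianPDFReal m v (s + 1) * volume.real (Icc s (s + 1)) := by
        simp
    _ ≤ ∫ x in Icc s (s + 1), gaussianPDFReal m v x :=
        setIntegral_ge_of_const_le_real measurableSet_Icc (by simp) (fun x hx =>
          gaussianPDFReal_antitoneOn m v (hs.trans hx.1 : m ≤ x) (show m ≤ s + 1 by linarith) hx.2)
          hint.integrableOn
    _ ≤ ∫ x in Ici s, gaussianPDFReal m v x :=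
        setIntegral_mono_set hint.integrableOn (ae_of_all _ (gaussianPDFReal_nonneg m v))
          Icc_subset_Ici_self.eventuallyLE
    _ = (gaussianReal m v).real (Ici s) := by
        rw [measureReal_def, gaussianReal_apply_eq_integral _ hv, ENNReal.toReal_ofReal
          (setIntegral_nonneg measurableSet_Ici fun x _ => gaussianPDFReal_nonneg m v x)]

lemma tendsto_sq_div_sub_sq_div_atTop {a b : ℝ} (ha : 0 < a) (hab : a < b) (p q : ℝ) :
    Tendsto (fun t => (t - p) ^ 2 / a - (t - q) ^ 2 / b) atTop atTop := by
  have hk : 0 < 1 / a - 1 / b := sub_pos.2 (one_div_lt_one_div_of_lt ha hab)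
  have : Tendsto (fun t => t * ((1 / a - 1 / b) * t + (2 * q / b - 2 * p / a)) +
      (p ^ 2 / a - q ^ 2 / b)) atTop atTop :=
    tendsto_atTop_add_const_right _ _ (tendsto_id.atTop_mul_atTop₀
      (tendsto_atTop_add_const_right _ _ (tendsto_id.const_mul_atTop hk)))
  refine this.congr fun t => ?_
  field_simp
  ring

lemma exists_measureReal_gaussianReal_Ioi_lt_Ici (m m' c : ℝ) {v v' : ℝ≥0} (hv' : 0 < v')
    (hlt : v' < v) :
    ∃ t, (gaussianReal m' v').real (Ioi (t - c)) < (gaussianReal m v).real (Ici (t + 1)) := by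
  have hv : 0 < v := hv'.trans hlt
  have hQ := tendsto_sq_div_sub_sq_div_atTop (a := 2 * v') (b := 2 * v) (by positivity)
    (by gcongr) (c + m') (m - 2)
  obtain ⟨t, htm, htm', ht⟩ := ((eventually_ge_atTop (m - 1)).and
    ((eventually_ge_atTop (m' + c)).and (hQ.eventually_gt_atTop (log √(2 * π * v))))).exists
  refine ⟨t, ?_⟩
  calc (gaussianReal m' v').real (Ioi (t - c)) ≤ exp (-(t - c - m') ^ 2 / (2 * v')) :=
        measureReal_gaussianReal_Ioi_le v' (by linarith)
    _ < exp (-(t + 1 + 1 - m) ^ 2 / (2 * v) - log √(2 * π * v)) := by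
        rw [show t - (c + m') = t - c - m' by ring, show t - (m - 2) = t + 1 + 1 - m by ring] at ht
        gcongr
        rw [neg_div, neg_div]
        linarith
    _ = gaussianPDFReal m v (t + 1 + 1) := by
        rw [gaussianPDFReal, exp_sub, exp_log (by positivity), div_eq_inv_mul]
    _ ≤ (gaussianReal m v).real (Ici (t + 1)) :=
        gaussianPDFReal_add_one_le_measureReal_gaussianReal_Ici hv.ne' (by linarith)

theorem not_tendsto_empiricalMean_gaussianReal_of_le_add {w w' : (N : ℕ) → Fin N → ℝ} {c : ℝ}
    (hle : ∀ N i, w N i ≤ w' N i + c) {m m' : ℝ} {v v' : ℝ≥0} (hv' : 0 < v') (hlt : v' < v)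
    (hw : ∀ f : ℝ →ᵇ ℝ,
      Tendsto (fun N => empiricalMean f (w N)) atTop (𝓝 (∫ x, f x ∂gaussianReal m v)))
    (hw' : ∀ f : ℝ →ᵇ ℝ,
      Tendsto (fun N => empiricalMean f (w' N)) atTop (𝓝 (∫ x, f x ∂gaussianReal m' v'))) :
    False := by
  obtain ⟨t, ht⟩ := exists_measureReal_gaussianReal_Ioi_lt_Ici m m' c hv' hlt
  exact (measureReal_Ici_le_of_tendsto_empiricalMean hle hw hw' t).not_gt ht

theorem empirical_not_gaussian_of_shifted_general (c : ℝ) (σ₁ σ₂ : ℝ)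
    (hσ₁ : 0 < σ₁) (hσ₂ : 0 < σ₂) (hne : σ₁ ≠ σ₂) (μ₂ : ℝ)
    (w₁ w₂ : (N : ℕ) → Fin N → ℝ)
    (hbd : ∀ N, ∀ i : Fin N, |w₂ N i - w₁ N i| ≤ c)
    (hconv : ∀ f : ℝ →ᵇ ℝ,
      Tendsto (fun N : ℕ => (N : ℝ)⁻¹ * ∑ i : Fin N, f (w₁ N i)) atTop
        (nhds (∫ x, f x ∂(gaussianReal 0 ⟨σ₁ ^ 2, sq_nonneg σ₁⟩)))) :
    ¬ ∀ f : ℝ →ᵇ ℝ,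
      Tendsto (fun N : ℕ => (N : ℝ)⁻¹ * ∑ i : Fin N, f (w₂ N i)) atTop
        (nhds (∫ x, f x ∂(gaussianReal μ₂ ⟨σ₂ ^ 2, sq_nonneg σ₂⟩))) := by
  intro hconv₂
  have hle₁ N i : w₁ N i ≤ w₂ N i + c := by linarith [(abs_le.mp (hbd N i)).1]
  have hle₂ N i : w₂ N i ≤ w₁ N i + c := by linarith [(abs_le.mp (hbd N i)).2]
  rcases hne.lt_or_gt with h | h
  · exact not_tendsto_empiricalMean_gaussianReal_of_le_add hle₂ (v := ⟨σ₂ ^ 2, sq_nonneg σ₂⟩)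
      (v' := ⟨σ₁ ^ 2, sq_nonneg σ₁⟩) (show (0 : ℝ) < σ₁ ^ 2 by positivity)
      (show σ₁ ^ 2 < σ₂ ^ 2 by gcongr) hconv₂ hconv
  · exact not_tendsto_empiricalMean_gaussianReal_of_le_add hle₁ (v := ⟨σ₁ ^ 2, sq_nonneg σ₁⟩)
      (v' := ⟨σ₂ ^ 2, sq_nonneg σ₂⟩) (show (0 : ℝ) < σ₂ ^ 2 by positivity)
      (show σ₂ ^ 2 < σ₁ ^ 2 by gcongr) hconv hconv₂

/-- if the entries of `w₂(N)` are uniformly within `c` of those of `w₁(N)`, and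
the empirical distribution of `w₁(N)` converges weakly to `N(0, σ₁²)`, then the empirical
distribution of `w₂(N)` cannot converge weakly to `N(μ₂, σ₂²)` when `σ₂ ≠ σ₁`.  Weak
convergence of the empirical measures is expressed through convergence of the empirical
averages of every bounded continuous test function to its Gaussian integral. -/
theorem empirical_not_gaussian_of_shifted (c : ℝ) (hc : 0 ≤ c) (σ₁ σ₂ : ℝ)
    (hσ₁ : 0 < σ₁) (hσ₂ : 0 < σ₂) (hne : σ₁ ≠ σ₂) (μ₂ : ℝ)
    (w₁ w₂ : (N : ℕ) → Fin N → ℝ)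
    (hbd : ∀ N, ∀ i : Fin N, |w₂ N i - w₁ N i| ≤ c)
    (hconv : ∀ f : ℝ →ᵇ ℝ,
      Tendsto (fun N : ℕ => (N : ℝ)⁻¹ * ∑ i : Fin N, f (w₁ N i)) atTop
        (nhds (∫ x, f x ∂(gaussianReal 0 ⟨σ₁ ^ 2, sq_nonneg σ₁⟩)))) :
    ¬ ∀ f : ℝ →ᵇ ℝ,
      Tendsto (fun N : ℕ => (N : ℝ)⁻¹ * ∑ i : Fin N, f (w₂ N i)) atTop
        (nhds (∫ x, f x ∂(gaussianReal μ₂ ⟨σ₂ ^ 2, sq_nonneg σ₂⟩))) :=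
  empirical_not_gaussian_of_shifted_general c σ₁ σ₂ hσ₁ hσ₂ hne μ₂ w₁ w₂ hbd hconv
end

section
/- Let n ≥ 1, N ≥ 1, β > 0, σ ≥ 0, and let x₀, x₁, …, x_n ∈ ℂ^N and real numbers Q, q, m, ρ satisfy: x_a^H x_a = 2NQ for 1 ≤ a ≤ n; x_a^H x_b = 2Nq for 1 ≤ a ≠ b ≤ n; x₀^H x_a = x_a^H x₀ = 2Nm for 1 ≤ a ≤ n; and x₀^H x₀ = 2Nρ. Set u_a = x_a − x₀ for 1 ≤ a ≤ n and define L = (β²σ²/(2 + βnσ²)) (∑_{a=1}^n u_a)(∑_{a=1}^n u_a)^H − β ∑_{a=1}^n u_a u_a^H. Then: (i) L(∑_{a=1}^n u_a) = s₁ · ∑_{a=1}^n u_a with s₁ = −(4Nβ/(2 + βnσ²))·((Q − q) + n(q − 2m + ρ)); (ii) for every b ∈ {1, …, n}, L(∑_{a=1}^n u_a − n u_b) = −2Nβ(Q − q)·(∑_{a=1}^n u_a − n u_b); (iii) L v = 0 for every v ∈ ℂ^N with u_a^H v = 0 for all 1 ≤ a ≤ n. -/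
/-!
Write `S = ∑ₐ uₐ`. Under the replica-symmetric ansatz the Gram matrix of the `uₐ = xₐ − x₀` has
the form `uₐᴴ u_b = c δₐ_b + d` with `c = 2N(Q − q)` and `d = 2N(q − 2m + ρ)`. Since
`L v = α (Sᴴ v) S − β ∑ₐ (uₐᴴ v) uₐ`, the vectors `S` and `S − n u_b` are mapped into their own
spans by reading off their overlaps with the `uₐ`: `uₐᴴ S = c + n d` and
`uₐᴴ (S − n u_b) = c (1 − n δₐ_b)`, so that `Sᴴ (S − n u_b) = 0`. The eigenvalue of `S` is
`(αn − β)(c + nd)`, and `αn − β = −2β/(2 + βnσ²)` for `α = β²σ²/(2 + βnσ²)`.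
-/

open Matrix Finset

namespace Matrix

variable {ι N R : Type*} [Fintype N] [CommRing R] [StarRing R]

theorem star_sub_dotProduct_sub_of_overlaps [DecidableEq ι] (x₀ : N → R) (x : ι → N → R)
    {Q q m ρ : R}
    (hQ : ∀ a, star (x a) ⬝ᵥ x a = Q) (hq : ∀ a b, a ≠ b → star (x a) ⬝ᵥ x b = q)
    (hm : ∀ a, star x₀ ⬝ᵥ x a = m) (hm' : ∀ a, star (x a) ⬝ᵥ x₀ = m)
    (hρ : star x₀ ⬝ᵥ x₀ = ρ) (a b : ι) :
    star (x a - x₀) ⬝ᵥ (x b - x₀) = (if a = b then Q - q else 0) + (q - 2 * m + ρ) := by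
  rw [star_sub, sub_dotProduct, dotProduct_sub, dotProduct_sub, hm, hm', hρ]
  split_ifs with h
  · subst h; rw [hQ]; ring
  · rw [hq a b h]; ring

variable [Fintype ι]

def replicaMatrix (α β : R) (u : ι → N → R) : Matrix N N R :=
  α • vecMulVec (∑ a, u a) (star (∑ a, u a)) - β • ∑ a, vecMulVec (u a) (star (u a))

theorem replicaMatrix_mulVec (α β : R) (u : ι → N → R) (v : N → R) :
    replicaMatrix α β u *ᵥ v =
      (α * (star (∑ a, u a) ⬝ᵥ v)) • ∑ a, u a - β • ∑ a, (star (u a) ⬝ᵥ v) • u a := by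
  simp only [replicaMatrix, sub_mulVec, smul_mulVec, sum_mulVec, vecMulVec_mulVec,
    op_smul_eq_smul, smul_smul]

theorem replicaMatrix_mulVec_of_forall_star_dotProduct_eq_zero (α β : R) (u : ι → N → R)
    {v : N → R} (hv : ∀ a, star (u a) ⬝ᵥ v = 0) : replicaMatrix α β u *ᵥ v = 0 := by
  simp [replicaMatrix_mulVec, star_sum, sum_dotProduct, hv]

section Gram

variable [DecidableEq ι] {u : ι → N → R} {c d : R}
  (hu : ∀ a b, star (u a) ⬝ᵥ u b = (if a = b then c else 0) + d)
include hu

theorem star_dotProduct_sum_of_gram (a : ι) :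
    star (u a) ⬝ᵥ ∑ b, u b = c + Fintype.card ι * d := by
  simp [dotProduct_sum, hu, sum_add_distrib]

theorem star_sum_dotProduct_sum_of_gram :
    star (∑ a, u a) ⬝ᵥ ∑ b, u b = Fintype.card ι * (c + Fintype.card ι * d) := by
  simp_rw [star_sum, sum_dotProduct, star_dotProduct_sum_of_gram hu, sum_const, card_univ,
    nsmul_eq_mul]

theorem star_dotProduct_sum_sub_card_smul_of_gram (a b : ι) :
    star (u a) ⬝ᵥ (∑ e, u e - (Fintype.card ι : R) • u b) =
      c - if a = b then Fintype.card ι * c else 0 := by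
  rw [dotProduct_sub, dotProduct_smul, star_dotProduct_sum_of_gram hu, hu, smul_eq_mul]
  split_ifs <;> ring

theorem star_sum_dotProduct_sum_sub_card_smul_of_gram (b : ι) :
    star (∑ a, u a) ⬝ᵥ (∑ e, u e - (Fintype.card ι : R) • u b) = 0 := by
  simp_rw [star_sum, sum_dotProduct, star_dotProduct_sum_sub_card_smul_of_gram hu,
    sum_sub_distrib, sum_ite_eq', mem_univ, if_true, sum_const, card_univ, nsmul_eq_mul, sub_self]

theorem replicaMatrix_mulVec_sum_of_gram (α β : R) :
    replicaMatrix α β u *ᵥ ∑ a, u a =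
      ((α * Fintype.card ι - β) * (c + Fintype.card ι * d)) • ∑ a, u a := by
  rw [replicaMatrix_mulVec, star_sum_dotProduct_sum_of_gram hu]
  simp only [star_dotProduct_sum_of_gram hu, ← smul_sum, smul_smul, ← sub_smul]
  congr 1
  ring

theorem replicaMatrix_mulVec_sum_sub_card_smul_of_gram (α β : R) (b : ι) :
    replicaMatrix α β u *ᵥ (∑ a, u a - (Fintype.card ι : R) • u b) =
      (-(β * c)) • (∑ a, u a - (Fintype.card ι : R) • u b) := by
  rw [replicaMatrix_mulVec, star_sum_dotProduct_sum_sub_card_smul_of_gram hu]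
  simp only [star_dotProduct_sum_sub_card_smul_of_gram hu, sub_smul, sum_sub_distrib, ite_smul,
    zero_smul, sum_ite_eq', mem_univ, if_true, ← smul_sum]
  module

end Gram

end Matrix

theorem replica_matrix_eigenvectors_general {n N : ℕ}
    (β σ : ℝ) (hβ : 0 < β)
    (x0 : Fin N → ℂ) (xs : Fin n → Fin N → ℂ) (Q q m ρ : ℝ)
    (hQ : ∀ a, star (xs a) ⬝ᵥ xs a = ((2 * N * Q : ℝ) : ℂ))
    (hq : ∀ a b, a ≠ b → star (xs a) ⬝ᵥ xs b = ((2 * N * q : ℝ) : ℂ))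
    (hm : ∀ a, star x0 ⬝ᵥ xs a = ((2 * N * m : ℝ) : ℂ))
    (hm' : ∀ a, star (xs a) ⬝ᵥ x0 = ((2 * N * m : ℝ) : ℂ))
    (hρ : star x0 ⬝ᵥ x0 = ((2 * N * ρ : ℝ) : ℂ)) :
    let u : Fin n → Fin N → ℂ := fun a => xs a - x0
    let L : Matrix (Fin N) (Fin N) ℂ :=
      ((β ^ 2 * σ ^ 2 / (2 + β * n * σ ^ 2) : ℝ) : ℂ) •
          vecMulVec (∑ a, u a) (star (∑ a, u a)) -
        (β : ℂ) • ∑ a, vecMulVec (u a) (star (u a))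
    (L.mulVec (∑ a, u a) =
        ((-(4 * N * β / (2 + β * n * σ ^ 2)) * ((Q - q) + n * (q - 2 * m + ρ)) : ℝ) : ℂ) •
          ∑ a, u a) ∧
      (∀ b : Fin n,
        L.mulVec ((∑ a, u a) - (n : ℂ) • u b) =
          ((-(2 * N * β * (Q - q)) : ℝ) : ℂ) • ((∑ a, u a) - (n : ℂ) • u b)) ∧
      ∀ v : Fin N → ℂ, (∀ a, star (u a) ⬝ᵥ v = 0) → L.mulVec v = 0 := by
  intro u L
  have hL : L = replicaMatrix _ _ u := rfl
  have hgram := star_sub_dotProduct_sub_of_overlaps x0 xs hQ hq hm hm' hρ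
  refine ⟨?_, fun b => ?_, fun v hv => ?_⟩
  · have hden : 2 + β * n * σ ^ 2 ≠ 0 := by positivity
    rw [hL, replicaMatrix_mulVec_sum_of_gram hgram, Fintype.card_fin]
    congr 1
    norm_cast
    field_simp
    push_cast
    ring
  · have h := fun α β => replicaMatrix_mulVec_sum_sub_card_smul_of_gram hgram α β b
    simp only [Fintype.card_fin] at h
    rw [hL, h]
    congr 1
    push_cast
    ring
  · exact replicaMatrix_mulVec_of_forall_star_dotProduct_eq_zero _ _ u hv

/-- eigen-structure of the replica matrix `L`.  Under the replica-symmetric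
overlap constraints on `x₀, x₁, …, xₙ ∈ ℂ^N`, with `uₐ = xₐ − x₀` and
`L = (β²σ²/(2 + βnσ²))(∑ₐ uₐ)(∑ₐ uₐ)ᴴ − β ∑ₐ uₐuₐᴴ`:
(i) `∑ₐ uₐ` is an eigenvector with eigenvalue `−(4Nβ/(2 + βnσ²))((Q−q) + n(q−2m+ρ))`;
(ii) each `∑ₐ uₐ − n·u_b` is an eigenvector with eigenvalue `−2Nβ(Q−q)`;
(iii) `Lv = 0` for every `v` orthogonal to all the `uₐ`. -/
theorem replica_matrix_eigenvectors {n N : ℕ} (hn : 1 ≤ n) (hN : 1 ≤ N)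
    (β σ : ℝ) (hβ : 0 < β) (hσ : 0 ≤ σ)
    (x0 : Fin N → ℂ) (xs : Fin n → Fin N → ℂ) (Q q m ρ : ℝ)
    (hQ : ∀ a, star (xs a) ⬝ᵥ xs a = ((2 * N * Q : ℝ) : ℂ))
    (hq : ∀ a b, a ≠ b → star (xs a) ⬝ᵥ xs b = ((2 * N * q : ℝ) : ℂ))
    (hm : ∀ a, star x0 ⬝ᵥ xs a = ((2 * N * m : ℝ) : ℂ))
    (hm' : ∀ a, star (xs a) ⬝ᵥ x0 = ((2 * N * m : ℝ) : ℂ))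
    (hρ : star x0 ⬝ᵥ x0 = ((2 * N * ρ : ℝ) : ℂ)) :
    let u : Fin n → Fin N → ℂ := fun a => xs a - x0
    let L : Matrix (Fin N) (Fin N) ℂ :=
      ((β ^ 2 * σ ^ 2 / (2 + β * n * σ ^ 2) : ℝ) : ℂ) •
          vecMulVec (∑ a, u a) (star (∑ a, u a)) -
        (β : ℂ) • ∑ a, vecMulVec (u a) (star (u a))
    (L.mulVec (∑ a, u a) =
        ((-(4 * N * β / (2 + β * n * σ ^ 2)) * ((Q - q) + n * (q - 2 * m + ρ)) : ℝ) : ℂ) •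
          ∑ a, u a) ∧
      (∀ b : Fin n,
        L.mulVec ((∑ a, u a) - (n : ℂ) • u b) =
          ((-(2 * N * β * (Q - q)) : ℝ) : ℂ) • ((∑ a, u a) - (n : ℂ) • u b)) ∧
      ∀ v : Fin N → ℂ, (∀ a, star (u a) ⬝ᵥ v = 0) → L.mulVec v = 0 :=
  replica_matrix_eigenvectors_general β σ hβ x0 xs Q q m ρ hQ hq hm hm' hρ
end
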